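/- Let H be a simple graph on k vertices and let s > 2k² be an integer. Then the number of labeled simple graphs on the vertex set {1,…,s} that contain no induced subgraph isomorphic to H is at most 2^{s(s−1)/2}·(1 − 2^{−k(k−1)/2})^{⌊s/(2k)⌋²}. (Equivalently, the probability that a uniformly random graph G ∈ G(s,1/2) contains no induced copy of H is at most (1 − 2^{−k(k−1)/2})^{⌊s/(2k)⌋²}.) -/
import Mathlib
open Finset
set_option linter.unusedSectionVars false

lemma card_restrict_eq {E : Type} [Fintype E] [DecidableEq E]
    (P : (E → Bool) → Prop) [DecidablePred P] (T : Finset E) (f0 : E → Bool)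
    (hinv : ∀ g h : E → Bool, (∀ e ∉ T, g e = h e) → P g → P h) :
    Fintype.card {g : E → Bool // P g}
      = Fintype.card {g : E → Bool // P g ∧ ∀ e ∈ T, g e = f0 e} * 2 ^ T.card := by
  classical
  have hcard : Fintype.card ({e // e ∈ T} → Bool) = 2 ^ T.card := by
    simp [Fintype.card_fun]
  rw [← hcard, ← Fintype.card_prod]
  apply Fintype.card_congr
  exact
    { toFun := fun g => (⟨fun e => if e ∈ T then f0 e else g.1 e,
        hinv g.1 _ (fun e he => by simp [he]) g.2, fun e he => by simp [he]⟩,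
        fun e => g.1 e.1)
      invFun := fun p => ⟨fun e => if he : e ∈ T then p.2 ⟨e, he⟩ else p.1.1 e,
        hinv p.1.1 _ (fun e he => by simp [he]) p.1.2.1⟩
      left_inv := fun g => by
        ext e
        by_cases he : e ∈ T <;> simp [he]
      right_inv := fun p => by
        refine Prod.ext (Subtype.ext (funext fun e => ?_)) (funext fun e => ?_)
        · by_cases he : e ∈ T
          · simp [he, (p.1.2.2 e he).symm]
          · simp [he]
        · simp [e.2] }

lemma card_and_not {α : Type} [Fintype α] (P Q : α → Prop)
    [DecidablePred P] [DecidablePred Q] :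
    Fintype.card {x // P x ∧ ¬ Q x}
      = Fintype.card {x // P x} - Fintype.card {x // P x ∧ Q x} := by
  classical
  have h := Finset.card_filter_add_card_filter_not
    (s := Finset.univ.filter (fun x => P x)) (p := Q)
  simp only [Finset.filter_filter] at h
  simp only [Fintype.card_subtype]
  omega

lemma count_blocks_aux {E : Type} [Fintype E] [DecidableEq E] {ι : Type} [DecidableEq ι]
    (B : ι → Finset E) (f : ι → E → Bool)
    (hdisj : ∀ i j, i ≠ j → Disjoint (B i) (B j)) (J : Finset ι) :
    Fintype.card {g : E → Bool // ∀ i ∈ J, ∃ e ∈ B i, g e ≠ f i e}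
      * ∏ i ∈ J, 2 ^ (B i).card
      = 2 ^ Fintype.card E * ∏ i ∈ J, (2 ^ (B i).card - 1) := by
  classical
  induction J using Finset.induction_on with
  | empty =>
    simp only [Finset.notMem_empty, false_implies, implies_true, Finset.prod_empty, mul_one]
    rw [Fintype.card_congr (Equiv.subtypeUnivEquiv (fun g => by simp))]
    simp [Fintype.card_fun]
  | @insert a J ha ih =>
    set P : (E → Bool) → Prop := fun g => ∀ i ∈ J, ∃ e ∈ B i, g e ≠ f i e with hP
    have hinv : ∀ g h : E → Bool, (∀ e ∉ B a, g e = h e) → P g → P h := by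
      intro g h hgh hg i hi
      obtain ⟨e, he, hne⟩ := hg i hi
      refine ⟨e, he, ?_⟩
      rwa [← hgh e (fun hea => (hdisj i a (fun hia => ha (hia ▸ hi)) |>.forall_ne_finset he hea) rfl)]
    -- card with insert predicate
    have key : Fintype.card {g : E → Bool // ∀ i ∈ insert a J, ∃ e ∈ B i, g e ≠ f i e}
        = Fintype.card {g : E → Bool // P g ∧ ¬ ∀ e ∈ B a, g e = f a e} := by
      apply Fintype.card_congr
      apply Equiv.subtypeEquivRight
      intro g
      simp only [Finset.forall_mem_insert, hP]
      push_neg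
      constructor
      · rintro ⟨⟨e, he, hne⟩, h2⟩; exact ⟨h2, e, he, hne⟩
      · rintro ⟨h2, e, he, hne⟩; exact ⟨⟨e, he, hne⟩, h2⟩
    rw [key, card_and_not P (fun g => ∀ e ∈ B a, g e = f a e)]
    have hsplit := card_restrict_eq P (B a) (f a) hinv
    have ih' : Fintype.card {g : E → Bool // P g} * ∏ i ∈ J, 2 ^ (B i).card
        = 2 ^ Fintype.card E * ∏ i ∈ J, (2 ^ (B i).card - 1) := ih
    set X := 2 ^ (B a).card with hX
    set Y := ∏ i ∈ J, 2 ^ (B i).card with hY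
    set Z := (2 : ℕ) ^ Fintype.card E with hZ
    set W := ∏ i ∈ J, (2 ^ (B i).card - 1) with hW
    set n := Fintype.card {g : E → Bool // P g} with hn
    set c := Fintype.card {g : E → Bool // P g ∧ ∀ e ∈ B a, g e = f a e} with hc
    rw [Finset.prod_insert ha, Finset.prod_insert ha, ← hX, ← hY, ← hW]
    calc (n - c) * (X * Y) = ((n - c) * X) * Y := by ring
      _ = (n * X - c * X) * Y := by rw [Nat.sub_mul]
      _ = (n * X - n) * Y := by rw [← hsplit]
      _ = (n * (X - 1)) * Y := by rw [Nat.mul_sub, Nat.mul_one]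
      _ = (X - 1) * (n * Y) := by ring
      _ = (X - 1) * (Z * W) := by rw [ih']
      _ = Z * ((X - 1) * W) := by ring


set_option linter.unusedSectionVars false

lemma count_blocks {E : Type} [Fintype E] [DecidableEq E] {ι : Type} [DecidableEq ι]
    (B : ι → Finset E) (f : ι → E → Bool)
    (hdisj : ∀ i j, i ≠ j → Disjoint (B i) (B j)) (J : Finset ι) :
    Nat.card {g : E → Bool // ∀ i ∈ J, ∃ e ∈ B i, g e ≠ f i e}
      * ∏ i ∈ J, 2 ^ (B i).card
      = 2 ^ Fintype.card E * ∏ i ∈ J, (2 ^ (B i).card - 1) := by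
  classical
  rw [Nat.card_eq_fintype_card]
  exact count_blocks_aux B f hdisj J

variable {V : Type} [Fintype V] [DecidableEq V] {s : ℕ}

def pairMap (σ : V ↪ Fin s) (z : {z : Sym2 V // ¬ z.IsDiag}) :
    {z : Sym2 (Fin s) // ¬ z.IsDiag} :=
  ⟨z.1.map σ, by rw [Sym2.isDiag_map σ.injective]; exact z.2⟩

lemma pairMap_injective (σ : V ↪ Fin s) : Function.Injective (pairMap σ) := by
  intro z w h
  exact Subtype.ext (Sym2.map.injective σ.injective (congrArg Subtype.val h))

def blockOf (σ : V ↪ Fin s) : Finset {z : Sym2 (Fin s) // ¬ z.IsDiag} :=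
  Finset.univ.image (pairMap σ)

lemma card_blockOf (σ : V ↪ Fin s) : (blockOf σ).card = (Fintype.card V).choose 2 := by
  rw [blockOf, Finset.card_image_of_injective _ (pairMap_injective σ), Finset.card_univ]
  exact Sym2.card_subtype_not_diag

lemma mem_blockOf (σ : V ↪ Fin s) {e : {z : Sym2 (Fin s) // ¬ z.IsDiag}}
    (he : e ∈ blockOf σ) :
    ∃ x y : Fin s, x ≠ y ∧ x ∈ Set.range σ ∧ y ∈ Set.range σ ∧ e.1 = s(x, y) := by
  rw [blockOf, Finset.mem_image] at he
  obtain ⟨⟨w, hw⟩, -, rfl⟩ := he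
  have key : ∀ w : Sym2 V, ¬ w.IsDiag →
      ∃ x y : Fin s, x ≠ y ∧ x ∈ Set.range σ ∧ y ∈ Set.range σ ∧ w.map σ = s(x, y) := by
    intro w
    induction w using Sym2.ind with
    | _ u v =>
      intro hw
      rw [Sym2.mk_isDiag_iff] at hw
      exact ⟨σ u, σ v, fun h => hw (σ.injective h), ⟨u, rfl⟩, ⟨v, rfl⟩, by simp⟩
  exact key w hw

noncomputable def chi (G : SimpleGraph (Fin s)) : {z : Sym2 (Fin s) // ¬ z.IsDiag} → Bool :=
  fun e => @decide (e.1 ∈ G.edgeSet) (Classical.propDecidable _)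

lemma chi_injective : Function.Injective (chi (s := s)) := by
  intro G G' h
  rw [← SimpleGraph.edgeSet_inj]
  ext e
  by_cases hd : e.IsDiag
  · exact iff_of_false (fun hm => SimpleGraph.not_isDiag_of_mem_edgeSet _ hm hd)
      (fun hm => SimpleGraph.not_isDiag_of_mem_edgeSet _ hm hd)
  · have := congrFun h ⟨e, hd⟩
    simpa [chi, decide_eq_decide] using this

noncomputable def pat (σ : V ↪ Fin s) (H : SimpleGraph V) :
    {z : Sym2 (Fin s) // ¬ z.IsDiag} → Bool :=
  fun e => @decide (e.1 ∈ (H.map σ).edgeSet) (Classical.propDecidable _)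

lemma embedding_of_agree (σ : V ↪ Fin s) (H : SimpleGraph V) (G : SimpleGraph (Fin s))
    (hagree : ∀ e ∈ blockOf σ, chi G e = pat σ H e) :
    Nonempty (H ↪g G) := by
  refine ⟨⟨σ, ?_⟩⟩
  intro u v
  rcases eq_or_ne u v with rfl | huv
  · simp
  · have hnd : ¬ (s(σ u, σ v) : Sym2 (Fin s)).IsDiag := by
      rw [Sym2.mk_isDiag_iff]; exact fun hc => huv (σ.injective hc)
    have hmem : (⟨s(σ u, σ v), hnd⟩ : {z : Sym2 (Fin s) // ¬ z.IsDiag}) ∈ blockOf σ := by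
      rw [blockOf, Finset.mem_image]
      exact ⟨⟨s(u, v), by rw [Sym2.mk_isDiag_iff]; exact huv⟩, Finset.mem_univ _,
        Subtype.ext (by simp [pairMap])⟩
    have h2 := hagree _ hmem
    simp only [chi, pat, decide_eq_decide] at h2
    rw [SimpleGraph.mem_edgeSet, SimpleGraph.mem_edgeSet] at h2
    rw [h2]
    exact SimpleGraph.map_adj_apply


lemma exists_lines (k s : ℕ) (hk : 1 ≤ k) (hs : 2 * k ^ 2 < s) :
    ∃ σ : Fin (s / (2 * k)) × Fin (s / (2 * k)) → (Fin k ↪ Fin s),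
      ∀ p p' : Fin (s / (2 * k)) × Fin (s / (2 * k)), p ≠ p' →
        ∀ x y : Fin s, x ≠ y →
        x ∈ Set.range (σ p) → y ∈ Set.range (σ p) →
        x ∈ Set.range (σ p') → y ∈ Set.range (σ p') → False := by
  set m := s / (2 * k) with hm
  have hkm : k ≤ m := by
    rw [hm, Nat.le_div_iff_mul_le (by positivity)]
    nlinarith
  have hm0 : m ≠ 0 := by omega
  obtain ⟨q, hq, hmq, hq2m⟩ := Nat.exists_prime_lt_and_le_two_mul m hm0
  haveI : Fact q.Prime := ⟨hq⟩
  haveI : NeZero q := ⟨hq.pos.ne'⟩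
  have hkq : k < q := lt_of_le_of_lt hkm hmq
  have hqs : k * q ≤ s := by
    calc k * q ≤ k * (2 * m) := Nat.mul_le_mul_left k hq2m
    _ = m * (2 * k) := by ring
    _ ≤ s := Nat.div_mul_le_self s (2 * k)
  -- the line function
  set R : Fin m → Fin m → Fin k → ZMod q :=
    fun a b i => ((a : ℕ) : ZMod q) * ((i : ℕ) : ZMod q) + ((b : ℕ) : ZMod q) with hR
  have hbound : ∀ (a b : Fin m) (i : Fin k), (i : ℕ) * q + (R a b i).val < s := by
    intro a b i
    have h1 : (R a b i).val < q := ZMod.val_lt _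
    have h2 : ((i : ℕ) + 1) * q ≤ k * q := Nat.mul_le_mul_right q i.2
    calc (i : ℕ) * q + (R a b i).val < ((i : ℕ) + 1) * q := by
          rw [add_one_mul]; omega
      _ ≤ k * q := h2
      _ ≤ s := hqs
  set σf : Fin m → Fin m → Fin k → Fin s :=
    fun a b i => ⟨(i : ℕ) * q + (R a b i).val, hbound a b i⟩ with hσf
  have decode : ∀ (a b a' b' : Fin m) (i i' : Fin k),
      σf a b i = σf a' b' i' → i = i' ∧ R a b i = R a' b' i' := by
    intro a b a' b' i i' h
    have hval : (i : ℕ) * q + (R a b i).val = (i' : ℕ) * q + (R a' b' i').val :=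
      congrArg Fin.val h
    have h1 : (R a b i).val < q := ZMod.val_lt _
    have h2 : (R a' b' i').val < q := ZMod.val_lt _
    have hdiv : ∀ (j : ℕ) (v : ℕ), v < q → (j * q + v) / q = j := by
      intro j v hv
      rw [mul_comm, Nat.mul_add_div hq.pos, Nat.div_eq_of_lt hv, add_zero]
    have hii : (i : ℕ) = (i' : ℕ) := by
      have := congrArg (· / q) hval
      simpa [hdiv _ _ h1, hdiv _ _ h2] using this
    have hi : i = i' := Fin.ext hii
    refine ⟨hi, ?_⟩
    rw [hii] at hval
    have : (R a b i).val = (R a' b' i').val := Nat.add_left_cancel hval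
    subst hi
    exact ZMod.val_injective _ this
  have hinjcast_m : ∀ a a' : Fin m, ((a : ℕ) : ZMod q) = ((a' : ℕ) : ZMod q) → a = a' := by
    intro a a' h
    have := congrArg ZMod.val h
    rwa [ZMod.val_cast_of_lt (lt_trans a.2 hmq), ZMod.val_cast_of_lt (lt_trans a'.2 hmq),
      ← Fin.ext_iff] at this
  have hinjcast_k : ∀ i i' : Fin k, ((i : ℕ) : ZMod q) = ((i' : ℕ) : ZMod q) → i = i' := by
    intro i i' h
    have := congrArg ZMod.val h
    rwa [ZMod.val_cast_of_lt (lt_trans i.2 hkq), ZMod.val_cast_of_lt (lt_trans i'.2 hkq),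
      ← Fin.ext_iff] at this
  refine ⟨fun p => ⟨σf p.1 p.2, ?_⟩, ?_⟩
  · intro i i' h
    exact (decode p.1 p.2 p.1 p.2 i i' h).1
  · rintro ⟨a, b⟩ ⟨a', b'⟩ hne x y hxy ⟨i1, hi1⟩ ⟨j1, hj1⟩ ⟨i2, hi2⟩ ⟨j2, hj2⟩
    simp only at hi1 hj1 hi2 hj2
    obtain ⟨rfl, hRx⟩ := decode a b a' b' i1 i2 (hi1.trans hi2.symm)
    obtain ⟨rfl, hRy⟩ := decode a b a' b' j1 j2 (hj1.trans hj2.symm)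
    have hij : i1 ≠ j1 := by
      rintro rfl
      exact hxy (hi1.symm.trans hj1)
    rw [hR] at hRx hRy
    beta_reduce at hRx hRy
    by_cases ha : ((a : ℕ) : ZMod q) = ((a' : ℕ) : ZMod q)
    · rw [ha] at hRx
      have hb : ((b : ℕ) : ZMod q) = ((b' : ℕ) : ZMod q) := add_left_cancel hRx
      exact hne (by rw [hinjcast_m a a' ha, hinjcast_m b b' hb])
    · have hfac : (((a : ℕ) : ZMod q) - ((a' : ℕ) : ZMod q))
          * (((i1 : ℕ) : ZMod q) - ((j1 : ℕ) : ZMod q)) = 0 := by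
        linear_combination hRx - hRy
      rcases mul_eq_zero.mp hfac with h | h
      · exact ha (sub_eq_zero.mp h)
      · exact hij (hinjcast_k _ _ (sub_eq_zero.mp h))


/-- Let `H` be a simple graph on `k` vertices and `s > 2k²`. The number of labeled
simple graphs on `{1,…,s}` with no induced subgraph isomorphic to `H` is at most
`2^{s(s-1)/2}·(1 - 2^{-k(k-1)/2})^{⌊s/(2k)⌋²}`. -/
theorem stmt6 (k : ℕ) (V : Type) [Fintype V] (H : SimpleGraph V)
    (hV : Fintype.card V = k) (s : ℕ) (hs : 2 * k ^ 2 < s) :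
    (Nat.card {G : SimpleGraph (Fin s) // ¬ Nonempty (H ↪g G)} : ℝ) ≤
      2 ^ (s * (s - 1) / 2) *
        (1 - (1 / 2 : ℝ) ^ (k * (k - 1) / 2)) ^ ((s / (2 * k)) ^ 2) := by
  classical
  rcases Nat.eq_zero_or_pos k with rfl | hk
  · -- k = 0 : V is empty, every graph contains H
    haveI hVe : IsEmpty V := Fintype.card_eq_zero_iff.mp hV
    haveI : IsEmpty {G : SimpleGraph (Fin s) // ¬ Nonempty (H ↪g G)} := by
      refine ⟨fun G => G.2 ⟨⟨⟨fun v => isEmptyElim v, fun {v} => isEmptyElim v⟩,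
        fun {v} => isEmptyElim v⟩⟩⟩
    rw [Nat.card_of_isEmpty]
    norm_num
  -- main case k ≥ 1
  haveI : DecidableEq V := Classical.decEq V
  set m := s / (2 * k) with hm
  obtain ⟨σ0, hσ0⟩ := exists_lines k s hk hs
  let eV : V ≃ Fin k := Fintype.equivFinOfCardEq hV
  set σ : Fin m × Fin m → (V ↪ Fin s) := fun p => eV.toEmbedding.trans (σ0 p) with hσ
  have hrange : ∀ p, Set.range (σ p) = Set.range (σ0 p) := by
    intro p
    have : ⇑(σ p) = (σ0 p) ∘ eV := rfl
    rw [this, Set.range_comp, Equiv.range_eq_univ, Set.image_univ]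
  set B : Fin m × Fin m → Finset {z : Sym2 (Fin s) // ¬ z.IsDiag} :=
    fun p => blockOf (σ p) with hB
  set f : Fin m × Fin m → {z : Sym2 (Fin s) // ¬ z.IsDiag} → Bool :=
    fun p => pat (σ p) H with hf
  have hdisj : ∀ p p', p ≠ p' → Disjoint (B p) (B p') := by
    intro p p' hne
    rw [Finset.disjoint_left]
    intro e he he'
    obtain ⟨x, y, hxy, hx, hy, hexy⟩ := mem_blockOf (σ p) he
    obtain ⟨x', y', hxy', hx', hy', hexy'⟩ := mem_blockOf (σ p') he'
    rw [hexy] at hexy'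
    rw [hrange] at hx hy
    rw [hrange] at hx' hy'
    rcases Sym2.eq_iff.mp hexy' with ⟨rfl, rfl⟩ | ⟨rfl, rfl⟩
    · exact hσ0 p p' hne x y hxy hx hy hx' hy'
    · exact hσ0 p p' hne x y hxy hx hy hy' hx'
  have himpl : ∀ G : SimpleGraph (Fin s), ¬ Nonempty (H ↪g G) →
      ∀ p ∈ (Finset.univ : Finset (Fin m × Fin m)), ∃ e ∈ B p, chi G e ≠ f p e := by
    intro G hG p _
    by_contra hcon
    push_neg at hcon
    exact hG (embedding_of_agree (σ p) H G (by simpa [hf, hB] using hcon))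
  have hstep : Nat.card {G : SimpleGraph (Fin s) // ¬ Nonempty (H ↪g G)}
      ≤ Nat.card {g : {z : Sym2 (Fin s) // ¬ z.IsDiag} → Bool //
          ∀ p ∈ (Finset.univ : Finset (Fin m × Fin m)), ∃ e ∈ B p, g e ≠ f p e} :=
    Nat.card_le_card_of_injective
      (fun G => ⟨chi G.1, himpl G.1 G.2⟩)
      (fun G G' h => Subtype.ext (chi_injective (congrArg Subtype.val h)))
  have hcount := count_blocks B f hdisj Finset.univ
  have hbcard : ∀ p, (B p).card = k.choose 2 := by
    intro p
    rw [hB]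
    exact (card_blockOf (σ p)).trans (by rw [hV])
  have hEcard : Fintype.card {z : Sym2 (Fin s) // ¬ z.IsDiag} = s.choose 2 := by
    rw [Sym2.card_subtype_not_diag, Fintype.card_fin]
  rw [hEcard] at hcount
  simp only [hbcard] at hcount
  rw [Finset.prod_const, Finset.prod_const, Finset.card_univ, Fintype.card_prod,
    Fintype.card_fin, ← pow_two] at hcount
  obtain ⟨N, hNdef⟩ : ∃ N, N = Nat.card {g : {z : Sym2 (Fin s) // ¬ z.IsDiag} → Bool //
      ∀ p ∈ (Finset.univ : Finset (Fin m × Fin m)), ∃ e ∈ B p, g e ≠ f p e} := ⟨_, rfl⟩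
  rw [← hNdef] at hcount hstep
  obtain ⟨b, hb⟩ : ∃ b, b = k.choose 2 := ⟨_, rfl⟩
  rw [← hb] at hcount
  clear hNdef
  have h2b : (1:ℕ) ≤ 2 ^ b := Nat.one_le_two_pow
  have hNR : (N : ℝ) * ((2:ℝ) ^ b) ^ (m ^ 2) = 2 ^ s.choose 2 * ((2:ℝ) ^ b - 1) ^ (m ^ 2) := by
    have h := congrArg (fun n : ℕ => (n : ℝ)) hcount
    push_cast [Nat.cast_sub h2b] at h
    exact_mod_cast h
  have hpow0 : ((2:ℝ) ^ b) ^ (m ^ 2) ≠ 0 := by positivity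
  have hNval : (N : ℝ) = 2 ^ s.choose 2 * (((2:ℝ) ^ b - 1) / 2 ^ b) ^ (m ^ 2) := by
    rw [div_pow, mul_div_assoc', eq_div_iff hpow0]
    exact hNR
  have hgoal_exp : s * (s - 1) / 2 = s.choose 2 := (Nat.choose_two_right s).symm
  have hgoal_exp2 : k * (k - 1) / 2 = b := by rw [hb, Nat.choose_two_right]
  rw [hgoal_exp, hgoal_exp2]
  have hfrac : (1 : ℝ) - (1 / 2) ^ b = ((2:ℝ) ^ b - 1) / 2 ^ b := by
    rw [one_div, inv_pow]
    have : ((2:ℝ) ^ b) ≠ 0 := by positivity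
    field_simp
  rw [hfrac]
  calc (Nat.card {G : SimpleGraph (Fin s) // ¬ Nonempty (H ↪g G)} : ℝ)
      ≤ (N : ℝ) := by exact_mod_cast hstep
    _ = 2 ^ s.choose 2 * (((2:ℝ) ^ b - 1) / 2 ^ b) ^ (m ^ 2) := hNval
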